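/- Let Λ = 𝒪[[T]] be the Iwasawa algebra over the ring of integers 𝒪 of a finite extension of ℚ_p. Let Y be a finitely generated Λ-module and Z ⊂ Y a free Λ-submodule. If Y contains no nonzero finite Λ-submodule, then Y/Z contains no nonzero finite Λ-submodule. -/

import Mathlib

/-!
Let `w ∈ Y` map into a finite submodule `N` of `Y ⧸ Z`. Since `Λ` is local and `N` is finite,
`N` is killed by a power `π ^ a` of (the image of) a uniformizer and by a power `T ^ b`, and
`π ∤ T ^ b`. The elements `π ^ a • w` and `T ^ b • w` of the free module `Z` satisfy
`T ^ b • (π ^ a • w) = π ^ a • (T ^ b • w)`, so all coordinates of `π ^ a • w` are divisible by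
`π ^ a`, i.e. `π ^ a • w = π ^ a • v` with `v ∈ Z`. Now `w - v` lies in the `π ^ a`-torsion of the
preimage of `N`, which meets `Z` trivially and therefore embeds into `N`; being finite, it is `0`
by hypothesis on `Y`. Hence `w ∈ Z`, and `N = ⊥`.
-/

open PowerSeries

theorem IsLocalRing.exists_pow_mem_annihilator_of_finite {R M : Type*} [CommRing R]
    [IsLocalRing R] [AddCommGroup M] [Module R M] [Finite M] {g : R} (hg : ¬IsUnit g) :
    ∃ n : ℕ, g ^ n ∈ Module.annihilator R M := by
  obtain ⟨i, j, hij, hgij⟩ := Set.finite_univ.exists_lt_map_eq_of_forall_mem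
    (f := fun k : ℕ => (g ^ k • · : M → M)) fun _ => Set.mem_univ _
  -- pigeonhole: `g ^ i` and `g ^ j` act alike on `M`, so `g ^ i * (1 - g ^ (j - i))` kills it
  have hunit : IsUnit (1 - g ^ (j - i)) :=
    isUnit_one_sub_self_of_mem_nonunits _ fun h => hg ((isUnit_pow_iff (by omega)).mp h)
  refine ⟨i, Module.mem_annihilator.mpr fun x => ?_⟩
  have hx : (1 - g ^ (j - i)) • g ^ i • x = 0 := by
    rw [smul_smul, sub_mul, one_mul, ← pow_add, Nat.sub_add_cancel hij.le, sub_smul,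
      congrFun hgij x, sub_self]
  exact hunit.smul_eq_zero.mp hx

theorem Module.Free.exists_eq_pow_smul_of_smul_eq_pow_smul {R F : Type*} [CommRing R]
    [IsDomain R] [AddCommGroup F] [Module R F] [Module.Free R F] {p s : R} (hp : Prime p)
    (hs : ¬p ∣ s) {n : ℕ} {x y : F} (h : s • x = p ^ n • y) : ∃ v : F, x = p ^ n • v := by
  let b := Module.Free.chooseBasis R F
  have hdvd : ∀ k, p ^ n ∣ b.repr x k := fun k =>
    hp.pow_dvd_of_dvd_mul_left n hs ⟨b.repr y k, by simpa using congrArg (b.repr · k) h⟩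
  choose c hc using hdvd
  refine ⟨∑ k ∈ (b.repr x).support, c k • b k, ?_⟩
  conv_lhs => rw [← b.linearCombination_repr x]
  rw [Finsupp.linearCombination_apply, Finsupp.sum, Finset.smul_sum]
  exact Finset.sum_congr rfl fun k _ => by rw [hc k, mul_smul]

theorem Submodule.finite_of_disjoint_of_le_comap_mkQ {R Y : Type*} [Ring R] [AddCommGroup Y]
    [Module R Y] {Z S : Submodule R Y} {N : Submodule R (Y ⧸ Z)} [Finite N]
    (hSZ : Disjoint S Z) (hSN : S ≤ N.comap Z.mkQ) : Finite S := by
  refine Finite.of_injective (fun s : S => (⟨Z.mkQ s, hSN s.2⟩ : N)) fun s t hst => ?_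
  have hsub : (s : Y) - t ∈ Z := (Submodule.Quotient.eq Z).mp (congrArg Subtype.val hst)
  exact Subtype.ext (sub_eq_zero.mp
    ((Submodule.disjoint_def.mp hSZ) _ (S.sub_mem s.2 t.2) hsub))

theorem PowerSeries.irreducible_C {R : Type*} [CommRing R] {r : R} (hr : Irreducible r) :
    Irreducible (C r) := by
  refine irreducible_iff.mpr ⟨fun h => hr.not_isUnit (by simpa using h.map constantCoeff),
    fun a b hab => ?_⟩
  simpa only [isUnit_iff_constantCoeff] using
    hr.isUnit_or_isUnit (by simpa using congrArg constantCoeff hab)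

theorem PowerSeries.not_C_dvd_X {R : Type*} [CommRing R] {r : R} (hr : ¬IsUnit r) :
    ¬C r ∣ X := by
  rintro ⟨f, hf⟩
  have h1 := congrArg (coeff 1) hf
  rw [coeff_one_X, coeff_C_mul] at h1
  exact hr (isUnit_of_dvd_one ⟨_, h1⟩)

theorem Submodule.eq_bot_of_finite_of_mem_annihilator {R Y : Type*} [CommRing R] [IsDomain R]
    [AddCommGroup Y] [Module R Y] {Z : Submodule R Y} [Module.Free R Z]
    (hY : ∀ N : Submodule R Y, Finite N → N = ⊥) {p s : R} (hp : Prime p) (hs : ¬p ∣ s)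
    {n : ℕ} {N : Submodule R (Y ⧸ Z)} [Finite N] (hpN : p ^ n ∈ N.annihilator)
    (hsN : s ∈ N.annihilator) : N = ⊥ := by
  let S := N.comap Z.mkQ ⊓ LinearMap.ker (LinearMap.lsmul R Y (p ^ n))
  have hSZ : Disjoint S Z := by
    refine Submodule.disjoint_def.mpr fun y hyS hyZ => ?_
    have h0 : p ^ n • (⟨y, hyZ⟩ : Z) = 0 := Subtype.ext hyS.2
    simpa using (smul_eq_zero.mp h0).resolve_left (pow_ne_zero n hp.ne_zero)
  have hS : S = ⊥ := hY S (finite_of_disjoint_of_le_comap_mkQ hSZ inf_le_left)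
  have hNZ : N.comap Z.mkQ ≤ Z := by
    intro w hw
    have mem_Z {r : R} (hr : r ∈ N.annihilator) : r • w ∈ Z := by
      rw [← Submodule.Quotient.mk_eq_zero, Submodule.Quotient.mk_smul]
      exact mem_annihilator.mp hr _ hw
    obtain ⟨v, hv⟩ := Module.Free.exists_eq_pow_smul_of_smul_eq_pow_smul hp hs
      (x := (⟨p ^ n • w, mem_Z hpN⟩ : Z)) (y := ⟨s • w, mem_Z hsN⟩)
      (Subtype.ext (smul_comm s (p ^ n) w))
    have hwv : w - v ∈ S := by
      refine ⟨sub_mem hw (by simp [(Submodule.Quotient.mk_eq_zero Z).mpr v.2]), ?_⟩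
      show p ^ n • (w - v) = 0
      rw [smul_sub, sub_eq_zero]
      simpa using congrArg Subtype.val hv
    rw [hS, mem_bot, sub_eq_zero] at hwv
    exact hwv ▸ v.2
  rw [← map_comap_eq_of_surjective Z.mkQ_surjective N, eq_bot_iff, map_le_iff_le_comap]
  simpa using hNZ

theorem quotient_by_free_no_finite_submodule_general
    (O : Type) [CommRing O] [IsDomain O] [IsDiscreteValuationRing O]
    -- Y : a finitely generated module over Λ = O[[T]]
    (Y : Type) [AddCommGroup Y] [Module (PowerSeries O) Y]
    -- Z : a free Λ-submodule of Y
    (Z : Submodule (PowerSeries O) Y) (hZ : Module.Free (PowerSeries O) Z)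
    -- Y contains no nonzero finite Λ-submodule
    (hY : ∀ N : Submodule (PowerSeries O) Y, Finite N → N = ⊥) :
    -- then Y/Z contains no nonzero finite Λ-submodule
    ∀ N : Submodule (PowerSeries O) (Y ⧸ Z), Finite N → N = ⊥ := by
  intro N hN
  obtain ⟨ϖ, hϖ⟩ := IsDiscreteValuationRing.exists_irreducible O
  have hπ : Prime (C ϖ) := (irreducible_C hϖ).prime
  obtain ⟨a, ha⟩ := IsLocalRing.exists_pow_mem_annihilator_of_finite (M := N) hπ.not_isUnit
  obtain ⟨b, hb⟩ :=
    IsLocalRing.exists_pow_mem_annihilator_of_finite (M := N) (X_prime (R := O)).not_isUnit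
  exact Submodule.eq_bot_of_finite_of_mem_annihilator hY hπ
    (fun h => not_C_dvd_X hϖ.not_isUnit (hπ.dvd_of_dvd_pow h)) ha hb

/-- **Greenberg–Vatsal, Lemma 2.6.**
Let `Λ = 𝒪[[T]]` be the Iwasawa algebra over the ring of integers `𝒪` of a finite extension
of `ℚ_p` (realized as `PowerSeries 𝒪`).  Let `Y` be a finitely generated `Λ`-module and
`Z ⊂ Y` a free `Λ`-submodule.  If `Y` contains no nonzero finite `Λ`-submodule, then `Y/Z`
contains no nonzero finite `Λ`-submodule.  ("Finite" means of finite cardinality.) -/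
theorem quotient_by_free_no_finite_submodule
    (p : ℕ) [Fact p.Prime]
    -- K : a finite extension of ℚ_p, with ring of integers O
    (K : Type) [Field K] [Algebra ℚ_[p] K] [FiniteDimensional ℚ_[p] K]
    (O : Type) [CommRing O] [IsDomain O] [IsDiscreteValuationRing O]
    [Algebra O K] [IsFractionRing O K]
    -- Y : a finitely generated module over Λ = O[[T]]
    (Y : Type) [AddCommGroup Y] [Module (PowerSeries O) Y]
    [Module.Finite (PowerSeries O) Y]
    -- Z : a free Λ-submodule of Y
    (Z : Submodule (PowerSeries O) Y) (hZ : Module.Free (PowerSeries O) Z)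
    -- Y contains no nonzero finite Λ-submodule
    (hY : ∀ N : Submodule (PowerSeries O) Y, Finite N → N = ⊥) :
    -- then Y/Z contains no nonzero finite Λ-submodule
    ∀ N : Submodule (PowerSeries O) (Y ⧸ Z), Finite N → N = ⊥ :=
  quotient_by_free_no_finite_submodule_general O Y Z hZ hY
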